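/- arXiv:math/0311299 — 5 statements merged into one kernel-verified Lean document; each statement's English description precedes it below -/
import Mathlib

section
/- Let h : ℂ → ℂ be entire and nowhere vanishing, and suppose h has finite order of growth: there exist a constant C > 0 and a natural number d such that |h(z)| ≤ Real.exp (C * (1 + |z|)^d) for all z ∈ ℂ.oThen there exists a polynomial P ∈ ℂ[X] with natural degree at most d such that h(z) = Complex.exp (P.eval z) for all z ∈ ℂ. -/
/-!
Since `h` has no zeros, `h = exp g` with `g` entire (a primitive of `h' / h`). The growth bound
says `Re g z ≤ C (1 + ‖z‖) ^ d`, and the Borel–Carathéodory inequality on the disc of radius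
`2 ‖z‖ + 1` turns this one-sided bound into `‖g z‖ = O((1 + ‖z‖) ^ d)`. Cauchy's estimates on
circles of growing radius then force every Taylor coefficient of `g` of order `> d` to vanish.
-/

open Complex Metric Filter Polynomial
open scoped Nat Topology

theorem Differentiable.exists_eq_cexp_of_ne_zero {h : ℂ → ℂ} (hh : Differentiable ℂ h)
    (hnz : ∀ z, h z ≠ 0) : ∃ g : ℂ → ℂ, Differentiable ℂ g ∧ ∀ z, h z = cexp (g z) := by
  obtain ⟨g, hg0, hg⟩ :=
    (hh.deriv.div hh hnz).isExactOn_univ.with_val_at 0 (Complex.log (h 0))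
  have hg' (z : ℂ) : HasDerivAt g (_root_.deriv h z / h z) z := hg z (Set.mem_univ z)
  have hderiv (z : ℂ) : HasDerivAt (fun w ↦ h w * cexp (-g w)) 0 z := by
    have hexp : HasDerivAt (fun w ↦ cexp (-g w)) (cexp (-g z) * -(_root_.deriv h z / h z)) z :=
      (hg' z).neg.cexp
    refine ((hh z).hasDerivAt.mul hexp).congr_deriv ?_
    field_simp [hnz z]
    ring
  refine ⟨g, fun z ↦ (hg' z).differentiableAt, fun z ↦ ?_⟩
  have hconst := is_const_of_deriv_eq_zero (fun w ↦ (hderiv w).differentiableAt)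
    (fun w ↦ (hderiv w).deriv) z 0
  rw [hg0, exp_neg, exp_neg, exp_log (hnz 0), mul_inv_cancel₀ (hnz 0),
    mul_inv_eq_one₀ (exp_ne_zero _)] at hconst
  exact hconst

theorem Differentiable.exists_norm_le_mul_pow_of_re_le {g : ℂ → ℂ} (hg : Differentiable ℂ g)
    {C : ℝ} {d : ℕ} (hre : ∀ z, (g z).re ≤ C * (1 + ‖z‖) ^ d) :
    ∃ B : ℝ, ∀ z, ‖g z‖ ≤ B * (1 + ‖z‖) ^ d := by
  refine ⟨2 ^ (d + 1) * (|C| + 1) + 3 * ‖g 0‖, fun z ↦ ?_⟩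
  set r := ‖z‖
  have hr : 0 ≤ r := norm_nonneg z
  have hpow : 1 ≤ (1 + r) ^ d := one_le_pow₀ (by linarith)
  set M := (|C| + 1) * (2 * (1 + r)) ^ d
  have hM : 0 < M := by positivity
  have hmaps : Set.MapsTo g (ball 0 (2 * r + 1)) {w | w.re ≤ M} := by
    intro w hw
    have hw : ‖w‖ < 2 * r + 1 := mem_ball_zero_iff.mp hw
    calc (g w).re ≤ C * (1 + ‖w‖) ^ d := hre w
      _ ≤ |C| * (1 + ‖w‖) ^ d := by gcongr; exact le_abs_self C
      _ ≤ (|C| + 1) * (2 * (1 + r)) ^ d := by gcongr <;> linarith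
  have hbc := borelCaratheodory hM hg.differentiableOn hmaps (by positivity)
    (mem_ball_zero_iff.mpr (by linarith))
  have hsub : 2 * r + 1 - r = 1 + r := by ring
  rw [hsub] at hbc
  calc ‖g z‖ ≤ 2 * M * r / (1 + r) + ‖g 0‖ * (2 * r + 1 + r) / (1 + r) := hbc
    _ ≤ 2 * M + 3 * ‖g 0‖ := by
      gcongr
      · rw [div_le_iff₀ (by positivity)]; nlinarith
      · rw [div_le_iff₀ (by positivity)]; nlinarith [norm_nonneg (g 0)]
    _ ≤ (2 ^ (d + 1) * (|C| + 1) + 3 * ‖g 0‖) * (1 + r) ^ d := by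
      have h2M : 2 * M = 2 ^ (d + 1) * (|C| + 1) * (1 + r) ^ d := by
        simp only [M, mul_pow, pow_succ]; ring
      have h3 := le_mul_of_one_le_right (by positivity : 0 ≤ 3 * ‖g 0‖) hpow
      rw [h2M, add_mul]
      linarith

theorem Differentiable.iteratedDeriv_eq_zero_of_norm_le_mul_pow {E : Type*}
    [NormedAddCommGroup E] [NormedSpace ℂ E] [CompleteSpace E] {f : ℂ → E}
    (hf : Differentiable ℂ f) {B : ℝ} {d n : ℕ} (hbound : ∀ z, ‖f z‖ ≤ B * (1 + ‖z‖) ^ d)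
    (hn : d < n) : iteratedDeriv n f 0 = 0 := by
  have hB : 0 ≤ B := by simpa using (norm_nonneg _).trans (hbound 0)
  have hcauchy (R : ℝ) (hR : 1 ≤ R) : ‖iteratedDeriv n f 0‖ ≤ n ! * B * 2 ^ d / R := by
    have hR0 : 0 < R := by linarith
    have hsphere (z : ℂ) (hz : z ∈ sphere 0 R) : ‖f z‖ ≤ B * (1 + R) ^ d := by
      simpa [mem_sphere_zero_iff_norm.mp hz] using hbound z
    calc ‖iteratedDeriv n f 0‖ ≤ n ! * (B * (1 + R) ^ d) / R ^ n :=
          norm_iteratedDeriv_le_of_forall_mem_sphere_norm_le n hR0 hf.diffContOnCl hsphere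
      _ ≤ n ! * (B * (2 ^ d * R ^ d)) / (R ^ d * R) := by
          gcongr
          · rw [← mul_pow]; gcongr; linarith
          · rw [← pow_succ]; exact pow_le_pow_right₀ hR hn
      _ = n ! * B * 2 ^ d / R := by field_simp
  have hlim : Tendsto (fun R : ℝ ↦ n ! * B * 2 ^ d / R) atTop (𝓝 0) :=
    tendsto_const_nhds.div_atTop tendsto_id
  exact norm_le_zero_iff.mp <| ge_of_tendsto hlim (eventually_atTop.mpr ⟨1, hcauchy⟩)

theorem Differentiable.exists_polynomial_of_norm_le_mul_pow {f : ℂ → ℂ}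
    (hf : Differentiable ℂ f) {B : ℝ} {d : ℕ} (hbound : ∀ z, ‖f z‖ ≤ B * (1 + ‖z‖) ^ d) :
    ∃ P : ℂ[X], P.natDegree ≤ d ∧ ∀ z, f z = P.eval z := by
  set a : ℕ → ℂ := fun n ↦ (n ! : ℂ)⁻¹ * iteratedDeriv n f 0
  refine ⟨∑ n ∈ Finset.range (d + 1), C (a n) * X ^ n, ?_, fun z ↦ ?_⟩
  · refine natDegree_sum_le_of_forall_le _ _ fun n hn ↦ ?_
    exact (natDegree_C_mul_X_pow_le _ _).trans (Nat.lt_succ_iff.mp (Finset.mem_range.mp hn))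
  · have htaylor := taylorSeries_eq_of_entire' 0 z hf
    rw [tsum_eq_sum (s := Finset.range (d + 1))] at htaylor
    · simp [← htaylor, eval_finsetSum, a]
    · intro n hn
      rw [hf.iteratedDeriv_eq_zero_of_norm_le_mul_pow hbound (by simpa using hn)]
      simp

theorem nonvanishing_entire_finite_order_is_exp_poly_general
    (h : ℂ → ℂ) (hdiff : Differentiable ℂ h) (hnz : ∀ z : ℂ, h z ≠ 0)
    (C : ℝ) (d : ℕ)
    (hgrowth : ∀ z : ℂ, ‖h z‖ ≤ Real.exp (C * (1 + ‖z‖) ^ d)) :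
    ∃ P : Polynomial ℂ, P.natDegree ≤ d ∧ ∀ z : ℂ, h z = Complex.exp (P.eval z) := by
  obtain ⟨g, hg, hhg⟩ := hdiff.exists_eq_cexp_of_ne_zero hnz
  have hre (z : ℂ) : (g z).re ≤ C * (1 + ‖z‖) ^ d := by
    simpa [hhg, norm_exp] using hgrowth z
  obtain ⟨B, hB⟩ := hg.exists_norm_le_mul_pow_of_re_le hre
  obtain ⟨P, hPdeg, hP⟩ := hg.exists_polynomial_of_norm_le_mul_pow hB
  exact ⟨P, hPdeg, fun z ↦ by rw [hhg, hP]⟩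

/-- A nowhere vanishing entire function of finite order of growth is the
exponential of a polynomial of degree at most the order. -/
theorem nonvanishing_entire_finite_order_is_exp_poly
    (h : ℂ → ℂ) (hdiff : Differentiable ℂ h) (hnz : ∀ z : ℂ, h z ≠ 0)
    (C : ℝ) (hC : 0 < C) (d : ℕ)
    (hgrowth : ∀ z : ℂ, ‖h z‖ ≤ Real.exp (C * (1 + ‖z‖) ^ d)) :
    ∃ P : Polynomial ℂ, P.natDegree ≤ d ∧ ∀ z : ℂ, h z = Complex.exp (P.eval z) :=
  nonvanishing_entire_finite_order_is_exp_poly_general h hdiff hnz C d hgrowth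
end

section
/- Let k : ℂ → ℂ be entire. Then for every integer n ≥ 1 and every real r > 0, the n-th derivative of k at the origin satisfies k⁽ⁿ⁾(0) = (n! / (π * rⁿ)) * ∫ θ in (0)..(2π), (Re (k (r * Complex.exp (θ * Complex.I)))) * Complex.exp (-(n * θ) * Complex.I) dθ, where the integral is a complex-valued integral of the real part of k on the circle of radius r multiplied by the character e^{-inθ}. -/
open Real


open scoped ComplexConjugate

lemma interval_integral_conj (f : ℝ → ℂ) (a b : ℝ) :
    ∫ θ in a..b, conj (f θ) = conj (∫ θ in a..b, f θ) := by
  simp [intervalIntegral, ← integral_conj, map_sub]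

/-- Schwarz-type coefficient formula: for `n ≥ 1`, the `n`-th derivative at the
origin of an entire function is recovered from the boundary values of its real
part on the circle of radius `r`. -/
theorem iteratedDeriv_eq_circle_integral_re
    (k : ℂ → ℂ) (hk : Differentiable ℂ k) (n : ℕ) (hn : 1 ≤ n) (r : ℝ) (hr : 0 < r) :
    iteratedDeriv n k 0 =
      ((n.factorial : ℂ) / ((Real.pi : ℂ) * (r : ℂ) ^ n)) *
        ∫ θ in (0:ℝ)..(2 * Real.pi),
          ((k ((r : ℂ) * Complex.exp ((θ : ℂ) * Complex.I))).re : ℂ) *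
            Complex.exp (-((n : ℂ) * (θ : ℂ)) * Complex.I) := by
  have hr0 : (r : ℂ) ≠ 0 := by exact_mod_cast hr.ne'
  have hexp : ∀ θ : ℝ, Complex.exp ((θ:ℂ) * Complex.I) ≠ 0 := fun θ => Complex.exp_ne_zero _
  set J1 : ℂ := ∫ θ in (0:ℝ)..(2 * Real.pi),
      k ((r : ℂ) * Complex.exp ((θ : ℂ) * Complex.I)) *
        Complex.exp (-((n : ℂ) * (θ : ℂ)) * Complex.I) with hJ1
  set J2 : ℂ := ∫ θ in (0:ℝ)..(2 * Real.pi),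
      k ((r : ℂ) * Complex.exp ((θ : ℂ) * Complex.I)) *
        Complex.exp (((n : ℂ) * (θ : ℂ)) * Complex.I) with hJ2
  -- Step A : Cauchy coefficient formula
  have hps : HasFPowerSeriesOnBall k (cauchyPowerSeries k 0 r) 0 ⊤ := by
    have := hk.hasFPowerSeriesOnBall 0 (R := ⟨r, hr.le⟩) (by exact_mod_cast hr)
    exact this
  have hA : iteratedDeriv n k 0 = (n.factorial : ℂ) *
      ((2 * Real.pi * Complex.I : ℂ)⁻¹ * (Complex.I * ((r:ℂ)⁻¹) ^ n * J1)) := by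
    have h1 : iteratedDeriv n k 0 = n.factorial • (cauchyPowerSeries k 0 r) n (fun _ => (1:ℂ)) := by
      rw [iteratedDeriv_eq_iteratedFDeriv, ← hps.factorial_smul 1 n]
    rw [h1, cauchyPowerSeries_apply]
    have h2 : (∮ z in C(0, r), ((1:ℂ) / (z - 0)) ^ n • (z - 0)⁻¹ • k z)
        = Complex.I * ((r:ℂ)⁻¹) ^ n * J1 := by
      rw [circleIntegral, hJ1, ← intervalIntegral.integral_const_mul]
      refine intervalIntegral.integral_congr fun θ _ => ?_
      simp only [deriv_circleMap, circleMap_zero, sub_zero, smul_eq_mul]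
      have he : Complex.exp (-((n : ℂ) * (θ : ℂ)) * Complex.I)
          = ((Complex.exp ((θ:ℂ) * Complex.I))⁻¹) ^ n := by
        rw [← Complex.exp_neg, ← Complex.exp_nat_mul]; ring_nf
      rw [he]
      field_simp
      ring
    rw [h2]; simp [nsmul_eq_mul]
  -- Step B : J2 = 0
  have hB : J2 = 0 := by
    have hd : DiffContOnCl ℂ (fun z => k z * z ^ n) (Metric.ball (0:ℂ) r) :=
      (hk.mul (differentiable_pow n)).diffContOnCl
    have h0 : (∮ z in C(0, r), (z - 0)⁻¹ • (k z * z ^ n))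
        = (2 * Real.pi * Complex.I : ℂ) • (k 0 * (0:ℂ) ^ n) :=
      hd.circleIntegral_sub_inv_smul (Metric.mem_ball_self hr)
    have h0' : (∮ z in C(0, r), (z - 0)⁻¹ • (k z * z ^ n)) = 0 := by
      rw [h0, zero_pow (by omega : n ≠ 0), mul_zero, smul_zero]
    have h2 : (∮ z in C(0, r), (z - 0)⁻¹ • (k z * z ^ n))
        = Complex.I * ((r:ℂ)) ^ n * J2 := by
      rw [circleIntegral, hJ2, ← intervalIntegral.integral_const_mul]
      refine intervalIntegral.integral_congr fun θ _ => ?_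
      simp only [deriv_circleMap, circleMap_zero, sub_zero, smul_eq_mul]
      have he : Complex.exp (((n : ℂ) * (θ : ℂ)) * Complex.I)
          = (Complex.exp ((θ:ℂ) * Complex.I)) ^ n := by
        rw [← Complex.exp_nat_mul]; ring_nf
      rw [he, mul_pow]
      field_simp
    have : Complex.I * ((r:ℂ)) ^ n * J2 = 0 := h2 ▸ h0'
    rcases mul_eq_zero.mp this with h | h
    · exact absurd h (by simp [Complex.I_ne_zero, pow_eq_zero_iff, hr0])
    · exact h
  -- Step C : the conjugate integral vanishes
  have hC : (∫ θ in (0:ℝ)..(2 * Real.pi),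
      (starRingEnd ℂ) (k ((r : ℂ) * Complex.exp ((θ : ℂ) * Complex.I))) *
        Complex.exp (-((n : ℂ) * (θ : ℂ)) * Complex.I)) = 0 := by
    have : ∀ θ : ℝ, (starRingEnd ℂ) (k ((r : ℂ) * Complex.exp ((θ : ℂ) * Complex.I))) *
        Complex.exp (-((n : ℂ) * (θ : ℂ)) * Complex.I)
        = (starRingEnd ℂ) (k ((r : ℂ) * Complex.exp ((θ : ℂ) * Complex.I)) *
            Complex.exp (((n : ℂ) * (θ : ℂ)) * Complex.I)) := by
      intro θ
      rw [map_mul, ← Complex.exp_conj]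
      congr 2
      simp [Complex.conj_I, Complex.conj_ofReal]
    rw [intervalIntegral.integral_congr (fun θ _ => this θ), interval_integral_conj, ← hJ2, hB,
      map_zero]
  -- Step D : split the real part
  have cont1 : Continuous fun θ : ℝ => k ((r : ℂ) * Complex.exp ((θ : ℂ) * Complex.I)) *
      Complex.exp (-((n : ℂ) * (θ : ℂ)) * Complex.I) := by
    have hkc := hk.continuous
    fun_prop
  have cont2 : Continuous fun θ : ℝ =>
      (starRingEnd ℂ) (k ((r : ℂ) * Complex.exp ((θ : ℂ) * Complex.I))) *
      Complex.exp (-((n : ℂ) * (θ : ℂ)) * Complex.I) :=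
    (continuous_star.comp (by have hkc := hk.continuous; fun_prop : Continuous fun θ : ℝ =>
      k ((r : ℂ) * Complex.exp ((θ : ℂ) * Complex.I)))).mul (by fun_prop)
  have hD : (∫ θ in (0:ℝ)..(2 * Real.pi),
          ((k ((r : ℂ) * Complex.exp ((θ : ℂ) * Complex.I))).re : ℂ) *
            Complex.exp (-((n : ℂ) * (θ : ℂ)) * Complex.I)) = J1 / 2 := by
    have hpt : ∀ θ : ℝ, ((k ((r : ℂ) * Complex.exp ((θ : ℂ) * Complex.I))).re : ℂ) *
            Complex.exp (-((n : ℂ) * (θ : ℂ)) * Complex.I)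
        = (k ((r : ℂ) * Complex.exp ((θ : ℂ) * Complex.I)) *
            Complex.exp (-((n : ℂ) * (θ : ℂ)) * Complex.I)
          + (starRingEnd ℂ) (k ((r : ℂ) * Complex.exp ((θ : ℂ) * Complex.I))) *
            Complex.exp (-((n : ℂ) * (θ : ℂ)) * Complex.I)) / 2 := by
      intro θ
      rw [← add_mul]
      rw [Complex.add_conj]
      push_cast
      ring
    rw [intervalIntegral.integral_congr (fun θ _ => hpt θ)]
    rw [intervalIntegral.integral_div]
    rw [intervalIntegral.integral_add (cont1.intervalIntegrable _ _)
      (cont2.intervalIntegrable _ _), hC, add_zero]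
  rw [hD, hA]
  have hπ : (Real.pi : ℂ) ≠ 0 := by exact_mod_cast Real.pi_ne_zero
  field_simp
  have hrn : (r:ℂ)^n * ((r:ℂ)⁻¹)^n = 1 := by rw [← mul_pow, mul_inv_cancel₀ hr0, one_pow]
  linear_combination ((n.factorial : ℂ) * J1) * hrn
end

section
/- Let k : ℂ → ℂ be entire and suppose there exist a constant C > 0 and a natural number d such that for all r ≥ 1, ∫ θ in (0)..(2π), |Re (k (r * Complex.exp (θ * Complex.I)))| dθ ≤ C * r^d. Then k is a polynomial function of degree at most d; that is, there exists a polynomial P ∈ ℂ[X] with natural degree at most d such that k z = P.eval z for all z ∈ ℂ. -/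
open Real

private lemma myIntervalIntegral_conj (f : ℝ → ℂ) (a b : ℝ) :
    (∫ x in a..b, (starRingEnd ℂ) (f x)) = (starRingEnd ℂ) (∫ x in a..b, f x) := by
  simp only [intervalIntegral, ← integral_conj, map_sub]

private lemma myConj_circleMap (r : ℝ) (hr : 0 < r) (θ : ℝ) :
    ((r:ℂ)^2)⁻¹ * (starRingEnd ℂ) (circleMap 0 r θ) = (circleMap 0 r θ)⁻¹ := by
  have h1 : (starRingEnd ℂ) (circleMap 0 r θ) * circleMap 0 r θ = (r:ℂ)^2 := by
    rw [mul_comm, Complex.mul_conj]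
    norm_cast
    simp [Complex.normSq_eq_norm_sq, norm_circleMap_zero, abs_of_pos hr]
  have hz : circleMap 0 r θ ≠ 0 := by simp [circleMap, hr.ne', Complex.exp_ne_zero]
  have hr2 : ((r:ℂ)^2) ≠ 0 := by exact_mod_cast (by positivity : (r:ℝ)^2 ≠ 0)
  have hr0 : (r:ℂ) ≠ 0 := by exact_mod_cast hr.ne'
  field_simp
  linear_combination h1

set_option maxHeartbeats 1000000 in
/-- An entire function whose circle L¹-means of the absolute value of its real
part grow at most like `C * r ^ d` is a polynomial of degree at most `d`. -/
theorem entire_with_poly_re_mean_is_poly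
    (k : ℂ → ℂ) (hk : Differentiable ℂ k) (C : ℝ) (hC : 0 < C) (d : ℕ)
    (hb : ∀ r : ℝ, 1 ≤ r →
      (∫ θ in (0:ℝ)..(2 * Real.pi),
        |(k ((r : ℂ) * Complex.exp ((θ : ℂ) * Complex.I))).re|) ≤ C * r ^ d) :
    ∃ P : Polynomial ℂ, P.natDegree ≤ d ∧ ∀ z : ℂ, k z = P.eval z := by
  have hπ : (0:ℝ) < π := Real.pi_pos
  have hπc : ((π:ℂ)) ≠ 0 := by exact_mod_cast hπ.ne'
  have hps : HasFPowerSeriesOnBall k (cauchyPowerSeries k 0 1) 0 ⊤ := by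
    have h := hk.hasFPowerSeriesOnBall (R := 1) 0 one_pos
    norm_num at h
    exact h
  set a : ℕ → ℂ := fun n => cauchyPowerSeries k 0 1 n (fun _ => 1) with ha
  have hznz : ∀ (r : ℝ), 0 < r → ∀ θ : ℝ, circleMap 0 r θ ≠ 0 := fun r hr θ => by
    simp [circleMap, hr.ne', Complex.exp_ne_zero]
  have hkc : Continuous k := hk.continuous
  have hcont : ∀ (m : ℕ) (r : ℝ), 0 < r →
      Continuous fun θ : ℝ => (circleMap 0 r θ)⁻¹ ^ m * k (circleMap 0 r θ) := by
    intro m r hr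
    exact (((continuous_circleMap 0 r).inv₀ (hznz r hr)).pow m).mul
      (hkc.comp (continuous_circleMap 0 r))
  have hcont2 : ∀ (m : ℕ) (r : ℝ),
      Continuous fun θ : ℝ => (circleMap 0 r θ) ^ m * k (circleMap 0 r θ) := by
    intro m r
    exact ((continuous_circleMap 0 r).pow m).mul (hkc.comp (continuous_circleMap 0 r))
  -- the Fourier coefficient formula
  have key1 : ∀ (n : ℕ) (r : ℝ), 0 < r →
      (∫ θ in (0:ℝ)..2*π, (circleMap 0 r θ)⁻¹ ^ n * k (circleMap 0 r θ))
        = (2*π) * a n := by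
    intro n r hr
    have h1 := (hk.hasFPowerSeriesOnBall 0 (Real.toNNReal_pos.mpr hr)).hasFPowerSeriesAt
    rw [Real.coe_toNNReal r hr.le] at h1
    have hser : cauchyPowerSeries k 0 r = cauchyPowerSeries k 0 1 :=
      h1.eq_formalMultilinearSeries hps.hasFPowerSeriesAt
    have hA : a n = (2*π*Complex.I : ℂ)⁻¹ *
        (Complex.I * ∫ θ in (0:ℝ)..2*π, (circleMap 0 r θ)⁻¹ ^ n * k (circleMap 0 r θ)) := by
      calc a n = cauchyPowerSeries k 0 r n (fun _ => 1) := by rw [hser]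
        _ = (2*π*Complex.I : ℂ)⁻¹ • ∮ z in C(0, r), ((1:ℂ)/(z-0))^n • (z-0)⁻¹ • k z :=
            cauchyPowerSeries_apply k 0 r n 1
        _ = (2*π*Complex.I : ℂ)⁻¹ *
            ∫ θ in (0:ℝ)..2*π, Complex.I * ((circleMap 0 r θ)⁻¹ ^ n * k (circleMap 0 r θ)) := by
            rw [circleIntegral]
            simp only [deriv_circleMap, smul_eq_mul, sub_zero, one_div]
            congr 1
            refine intervalIntegral.integral_congr fun θ _ => ?_
            have hz := hznz r hr θ
            field_simp
        _ = (2*π*Complex.I : ℂ)⁻¹ *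
            (Complex.I * ∫ θ in (0:ℝ)..2*π, (circleMap 0 r θ)⁻¹ ^ n * k (circleMap 0 r θ)) := by
            rw [intervalIntegral.integral_const_mul]
    have hI : (Complex.I) ≠ 0 := Complex.I_ne_zero
    rw [hA]
    field_simp
  -- negative Fourier coefficients vanish (Cauchy–Goursat)
  have key2 : ∀ (n : ℕ) (r : ℝ), 0 < r →
      (∫ θ in (0:ℝ)..2*π, (circleMap 0 r θ) ^ (n+1) * k (circleMap 0 r θ)) = 0 := by
    intro n r hr
    have h0 : (∮ z in C(0, r), z ^ n * k z) = 0 := by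
      apply Complex.circleIntegral_eq_zero_of_differentiable_on_off_countable hr.le
        Set.countable_empty
      · exact ((continuous_pow n).mul hkc).continuousOn
      · intro z _
        exact (differentiable_pow n z).mul (hk z)
    rw [circleIntegral] at h0
    simp only [deriv_circleMap, smul_eq_mul] at h0
    have h1 : Complex.I * (∫ θ in (0:ℝ)..2*π,
        (circleMap 0 r θ) ^ (n+1) * k (circleMap 0 r θ)) = 0 := by
      calc Complex.I * (∫ θ in (0:ℝ)..2*π, (circleMap 0 r θ) ^ (n+1) * k (circleMap 0 r θ))
          = ∫ θ in (0:ℝ)..2*π, Complex.I * ((circleMap 0 r θ) ^ (n+1) * k (circleMap 0 r θ)) :=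
            (intervalIntegral.integral_const_mul _ _).symm
        _ = ∫ θ in (0:ℝ)..2*π,
              circleMap 0 r θ * Complex.I * (circleMap 0 r θ ^ n * k (circleMap 0 r θ)) :=
            intervalIntegral.integral_congr fun θ _ => by ring
        _ = 0 := h0
    exact (mul_eq_zero.mp h1).resolve_left Complex.I_ne_zero
  -- the key identity for the real part
  have key3 : ∀ (n : ℕ) (r : ℝ), 0 < r →
      (∫ θ in (0:ℝ)..2*π, (circleMap 0 r θ)⁻¹ ^ (n+1) * ((k (circleMap 0 r θ)).re : ℂ))
        = π * a (n+1) := by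
    intro n r hr
    have hr2c : (starRingEnd ℂ) ((r:ℂ)^2)⁻¹ = ((r:ℂ)^2)⁻¹ := by
      rw [map_inv₀, map_pow, Complex.conj_ofReal]
    have hsplit : ∀ θ : ℝ, (circleMap 0 r θ)⁻¹ ^ (n+1) * ((k (circleMap 0 r θ)).re : ℂ)
        = (1/2 : ℂ) * ((circleMap 0 r θ)⁻¹ ^ (n+1) * k (circleMap 0 r θ))
          + (1/2 : ℂ) * (starRingEnd ℂ)
              ((((r:ℂ)^2)⁻¹)^(n+1) * ((circleMap 0 r θ) ^ (n+1) * k (circleMap 0 r θ))) := by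
      intro θ
      have hre : ((k (circleMap 0 r θ)).re : ℂ)
          = (k (circleMap 0 r θ) + (starRingEnd ℂ) (k (circleMap 0 r θ))) / 2 := by
        rw [Complex.add_conj]; push_cast; ring
      have hz := hznz r hr θ
      have hr2 : ((r:ℂ)^2) ≠ 0 := by exact_mod_cast (by positivity : (r:ℝ)^2 ≠ 0)
      have hcz : (starRingEnd ℂ) (circleMap 0 r θ) = ((r:ℂ)^2) * (circleMap 0 r θ)⁻¹ := by
        have h := myConj_circleMap r hr θ
        have hr0 : (r:ℂ) ≠ 0 := by exact_mod_cast hr.ne'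
        field_simp at h ⊢
        linear_combination h
      rw [hre]
      simp only [map_mul, map_pow, hr2c, hcz]
      rw [mul_pow, show ((r:ℂ)^2)⁻¹ ^ (n+1) * (((r:ℂ)^2)^(n+1) * ((circleMap 0 r θ)⁻¹)^(n+1)
          * (starRingEnd ℂ) (k (circleMap 0 r θ)))
        = (((r:ℂ)^2)⁻¹ * ((r:ℂ)^2))^(n+1) * (((circleMap 0 r θ)⁻¹)^(n+1)
          * (starRingEnd ℂ) (k (circleMap 0 r θ))) by ring,
        inv_mul_cancel₀ hr2, one_pow, one_mul]
      ring
    rw [intervalIntegral.integral_congr fun θ _ => hsplit θ]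
    have hi1 : IntervalIntegrable
        (fun θ : ℝ => (1/2 : ℂ) * ((circleMap 0 r θ)⁻¹ ^ (n+1) * k (circleMap 0 r θ)))
        MeasureTheory.volume 0 (2*π) :=
      (continuous_const.mul (hcont (n+1) r hr)).intervalIntegrable _ _
    have hi2 : IntervalIntegrable
        (fun θ : ℝ => (1/2 : ℂ) * (starRingEnd ℂ)
          ((((r:ℂ)^2)⁻¹)^(n+1) * ((circleMap 0 r θ) ^ (n+1) * k (circleMap 0 r θ))))
        MeasureTheory.volume 0 (2*π) := by
      apply Continuous.intervalIntegrable
      exact continuous_const.mul (Complex.continuous_conj.comp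
        (continuous_const.mul (hcont2 (n+1) r)))
    rw [intervalIntegral.integral_add hi1 hi2,
      intervalIntegral.integral_const_mul, intervalIntegral.integral_const_mul,
      key1 (n+1) r hr,
      myIntervalIntegral_conj (fun θ =>
        (((r:ℂ)^2)⁻¹)^(n+1) * ((circleMap 0 r θ) ^ (n+1) * k (circleMap 0 r θ))),
      intervalIntegral.integral_const_mul, key2 n r hr]
    simp
    push_cast
    ring
  -- norm bound on the coefficients
  have hbd : ∀ (n : ℕ) (r : ℝ), 1 ≤ r → π * ‖a (n+1)‖ ≤ r⁻¹^(n+1) * (C * r^d) := by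
    intro n r hr1
    have hr : 0 < r := lt_of_lt_of_le one_pos hr1
    have h3 := key3 n r hr
    have heq : π * ‖a (n+1)‖ = ‖(π : ℂ) * a (n+1)‖ := by
      rw [norm_mul, Complex.norm_real, Real.norm_eq_abs, abs_of_pos hπ]
    rw [heq, show ((π : ℂ) * a (n+1)) = _ from h3.symm]
    calc ‖∫ θ in (0:ℝ)..2*π, (circleMap 0 r θ)⁻¹ ^ (n+1) * ((k (circleMap 0 r θ)).re : ℂ)‖
        ≤ ∫ θ in (0:ℝ)..2*π, ‖(circleMap 0 r θ)⁻¹ ^ (n+1) * ((k (circleMap 0 r θ)).re : ℂ)‖ :=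
          intervalIntegral.norm_integral_le_integral_norm (by positivity)
      _ = ∫ θ in (0:ℝ)..2*π, r⁻¹^(n+1) * |(k (circleMap 0 r θ)).re| := by
          refine intervalIntegral.integral_congr fun θ _ => ?_
          rw [norm_mul, norm_pow, norm_inv, norm_circleMap_zero,
            abs_of_pos hr, Complex.norm_real, Real.norm_eq_abs]
      _ = r⁻¹^(n+1) * ∫ θ in (0:ℝ)..2*π, |(k (circleMap 0 r θ)).re| :=
          intervalIntegral.integral_const_mul _ _
      _ ≤ r⁻¹^(n+1) * (C * r^d) := by
          have hle := hb r hr1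
          simp only [circleMap_zero]
          exact mul_le_mul_of_nonneg_left hle (by positivity)
  -- coefficients beyond d vanish
  have hvan : ∀ n : ℕ, d + 1 ≤ n → a n = 0 := by
    intro n hn
    obtain ⟨m, rfl⟩ : ∃ m, n = m + 1 := ⟨n - 1, by omega⟩
    by_contra hne
    have hpos : 0 < ‖a (m+1)‖ := norm_pos_iff.mpr hne
    have hlim : ∀ r : ℝ, 1 ≤ r → π * ‖a (m+1)‖ ≤ C / r := by
      intro r hr1
      have hr : 0 < r := lt_of_lt_of_le one_pos hr1
      refine (hbd m r hr1).trans ?_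
      have hdm : r^d ≤ r^m := pow_le_pow_right₀ hr1 (by omega)
      calc r⁻¹^(m+1) * (C * r^d) ≤ r⁻¹^(m+1) * (C * r^m) := by
            apply mul_le_mul_of_nonneg_left _ (by positivity)
            exact mul_le_mul_of_nonneg_left hdm hC.le
        _ = C / r := by
            have hm : r^m ≠ 0 := by positivity
            rw [inv_pow, pow_succ, mul_inv, div_eq_mul_inv, show (r^m)⁻¹ * r⁻¹ * (C * r^m) = C * r⁻¹ * ((r^m)⁻¹ * r^m) by ring, inv_mul_cancel₀ hm, mul_one]
    have ht : Filter.Tendsto (fun r : ℝ => C / r) Filter.atTop (nhds 0) :=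
      Filter.Tendsto.div_atTop tendsto_const_nhds Filter.tendsto_id
    have hle0 : π * ‖a (m+1)‖ ≤ 0 :=
      ge_of_tendsto ht (Filter.eventually_atTop.mpr ⟨1, fun r hr => hlim r hr⟩)
    nlinarith
  -- assemble the polynomial
  refine ⟨∑ i ∈ Finset.range (d+1), Polynomial.C (a i) * Polynomial.X ^ i, ?_, ?_⟩
  · apply Polynomial.natDegree_sum_le_of_forall_le
    intro i hi
    exact (Polynomial.natDegree_C_mul_X_pow_le (a i) i).trans
      (by simpa using Nat.lt_succ_iff.mp (Finset.mem_range.mp hi))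
  · intro z
    have hs := hps.hasSum (y := z) (by simp [EMetric.mem_ball])
    rw [zero_add] at hs
    have happ : ∀ n, (cauchyPowerSeries k 0 1 n fun _ => z) = a n * z^n := by
      intro n
      simp only [ha, cauchyPowerSeries, ContinuousMultilinearMap.mkPiRing_apply,
        Fin.prod_const, smul_eq_mul, one_pow]
      ring
    rw [show (fun n => cauchyPowerSeries k 0 1 n fun _ => z) = fun n => a n * z^n from
      funext happ] at hs
    have hfin : HasSum (fun n => a n * z^n)
        (∑ i ∈ Finset.range (d+1), a i * z^i) := by
      apply hasSum_sum_of_ne_finset_zero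
      intro n hn
      rw [hvan n (by simpa [Nat.succ_le_iff, Finset.mem_range] using hn), zero_mul]
    rw [hs.unique hfin]
    simp [Polynomial.eval_finset_sum]
end

section
/- Let k : ℂ → ℂ be entire and suppose there exist a constant C > 0 and a natural number d such that Re (k z) ≤ C * (1 + |z|)^d for all z ∈ ℂ. Then k is a polynomial function of degree at most d; that is, there exists a polynomial P ∈ ℂ[X] with natural degree at most d such that k z = P.eval z for all z ∈ ℂ. -/
/-!
Borel–Carathéodory on the disc of radius `2‖z‖ + 1` turns the one-sided bound on `Re k` into a
two-sided bound `‖k z‖ ≤ A (1 + ‖z‖) ^ d`. Cauchy's estimate on the circle of radius `R` then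
bounds the `n`-th derivative of `k` at `0` by a multiple of `(1 + R) ^ d / R ^ n`, which tends
to `0` for `n > d`; hence the Taylor series of `k` at `0` is a polynomial of degree at most `d`.
-/

open Filter Topology Metric Polynomial Nat

lemma tendsto_one_add_pow_div_pow_atTop_zero {d n : ℕ} (hdn : d < n) :
    Tendsto (fun R : ℝ => (1 + R) ^ d / R ^ n) atTop (𝓝 0) := by
  have hdeg : ((X + C 1 : ℝ[X]) ^ d).degree < ((X : ℝ[X]) ^ n).degree := by
    rw [degree_pow, degree_X_add_C, degree_X_pow, nsmul_one]
    exact_mod_cast hdn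
  simpa [add_comm] using div_tendsto_atTop_zero_of_degree_lt _ _ hdeg

namespace Differentiable

theorem iteratedDeriv_eq_zero_of_norm_le_mul_one_add_norm_pow
    {F : Type*} [NormedAddCommGroup F] [NormedSpace ℂ F] [CompleteSpace F]
    {f : ℂ → F} (hf : Differentiable ℂ f) {A : ℝ} {d n : ℕ}
    (hA : ∀ z, ‖f z‖ ≤ A * (1 + ‖z‖) ^ d) (hdn : d < n) :
    iteratedDeriv n f 0 = 0 := by
  have hcauchy (R : ℝ) (hR : 0 < R) :
      ‖iteratedDeriv n f 0‖ ≤ n ! * A * ((1 + R) ^ d / R ^ n) := by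
    calc ‖iteratedDeriv n f 0‖ ≤ n ! * (A * (1 + R) ^ d) / R ^ n :=
          Complex.norm_iteratedDeriv_le_of_forall_mem_sphere_norm_le n hR hf.diffContOnCl
            fun z hz => by simpa [mem_sphere_zero_iff_norm.1 hz] using hA z
      _ = n ! * A * ((1 + R) ^ d / R ^ n) := by ring
  have hlim : Tendsto (fun R : ℝ => n ! * A * ((1 + R) ^ d / R ^ n)) atTop (𝓝 0) := by
    simpa using (tendsto_one_add_pow_div_pow_atTop_zero hdn).const_mul (n ! * A)
  exact norm_le_zero_iff.1 <| ge_of_tendsto hlim <| (eventually_gt_atTop 0).mono hcauchy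

theorem norm_le_of_re_le_mul_one_add_norm_pow {f : ℂ → ℂ} (hf : Differentiable ℂ f)
    {C : ℝ} (hC : 0 < C) {d : ℕ} (hre : ∀ z, (f z).re ≤ C * (1 + ‖z‖) ^ d) (z : ℂ) :
    ‖f z‖ ≤ (2 ^ (d + 1) * C + 3 * ‖f 0‖) * (1 + ‖z‖) ^ d := by
  set t := ‖z‖
  have ht : 0 ≤ t := norm_nonneg z
  have hz : z ∈ ball (0 : ℂ) (2 * t + 1) := by rw [mem_ball_zero_iff]; linarith
  have hmaps : Set.MapsTo f (ball 0 (2 * t + 1)) {w | w.re ≤ C * (2 * (1 + t)) ^ d} :=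
    fun w hw => (hre w).trans <| by
      gcongr
      linarith [mem_ball_zero_iff.1 hw]
  have hpow : 1 ≤ (1 + t) ^ d := one_le_pow₀ (by linarith)
  have hf0 : 0 ≤ ‖f 0‖ := norm_nonneg _
  calc ‖f z‖ ≤ 2 * (C * (2 * (1 + t)) ^ d) * t / (2 * t + 1 - t)
        + ‖f 0‖ * (2 * t + 1 + t) / (2 * t + 1 - t) :=
        Complex.borelCaratheodory (by positivity) hf.differentiableOn hmaps (by positivity) hz
    _ ≤ 2 * (C * (2 * (1 + t)) ^ d) + 3 * ‖f 0‖ := by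
      gcongr
      · rw [div_le_iff₀ (by linarith)]; nlinarith [show 0 < C * (2 * (1 + t)) ^ d by positivity]
      · rw [div_le_iff₀ (by linarith)]; nlinarith
    _ ≤ (2 ^ (d + 1) * C + 3 * ‖f 0‖) * (1 + t) ^ d := by
      rw [mul_pow, pow_succ]; nlinarith

theorem exists_polynomial_of_iteratedDeriv_eq_zero {f : ℂ → ℂ} (hf : Differentiable ℂ f)
    {d : ℕ} (h : ∀ n, d < n → iteratedDeriv n f 0 = 0) :
    ∃ P : ℂ[X], P.natDegree ≤ d ∧ ∀ z, f z = P.eval z := by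
  refine ⟨∑ n ∈ Finset.range (d + 1), C ((n ! : ℂ)⁻¹ * iteratedDeriv n f 0) * X ^ n,
    natDegree_sum_le_of_forall_le _ _ fun n hn =>
      (natDegree_C_mul_X_pow_le _ _).trans (Nat.lt_succ_iff.1 (Finset.mem_range.1 hn)),
    fun z => ?_⟩
  have htaylor := Complex.hasSum_taylorSeries_of_entire hf 0 z
  rw [htaylor.unique (hasSum_sum_of_ne_finset_zero (s := Finset.range (d + 1)) fun n hn => by
    simp [h n (by simpa using hn)])]
  simp only [sub_zero, smul_eq_mul, eval_finsetSum, eval_mul, eval_C, eval_pow, eval_X]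
  exact Finset.sum_congr rfl fun n _ => by ring

end Differentiable

/-- Borel–Carathéodory-type statement: an entire function whose real part is
bounded above by `C * (1 + |z|) ^ d` is a polynomial of degree at most `d`. -/
theorem entire_with_poly_re_bound_is_poly
    (k : ℂ → ℂ) (hk : Differentiable ℂ k) (C : ℝ) (hC : 0 < C) (d : ℕ)
    (hb : ∀ z : ℂ, (k z).re ≤ C * (1 + ‖z‖) ^ d) :
    ∃ P : Polynomial ℂ, P.natDegree ≤ d ∧ ∀ z : ℂ, k z = P.eval z :=
  hk.exists_polynomial_of_iteratedDeriv_eq_zero fun _ hdn =>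
    hk.iteratedDeriv_eq_zero_of_norm_le_mul_one_add_norm_pow
      (hk.norm_le_of_re_le_mul_one_add_norm_pow hC hb) hdn
end

section
/- Let u : ℂ → ℝ be twice continuously differentiable (ContDiff ℝ 2 u). Then for every real r > 0, ∫ ρ in (0)..(r), ((1/(2*π)) * ∫ z in Metric.ball (0:ℂ) ρ, (Δu) z ∂(volume)) / ρ dρ = (1/(2*π)) * ∫ θ in (0)..(2*π), u (r * Complex.exp (θ * Complex.I)) dθ − u 0, where (Δu) z denotes the Laplacian of u at z, i.e. the sum of the second partial derivatives of u in the directions 1 and I (identifying ℂ with ℝ²). -/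
open MeasureTheory Set intervalIntegral Real

/-- The Laplacian of `u : ℂ → ℝ` at `z`: the sum of the pure second directional
derivatives of `u` at `z` in the orthonormal directions `1` and `I` of `ℂ ≅ ℝ²`. -/
noncomputable def planarLaplacian (u : ℂ → ℝ) (z : ℂ) : ℝ :=
  fderiv ℝ (fun w => fderiv ℝ u w 1) z 1 +
    fderiv ℝ (fun w => fderiv ℝ u w Complex.I) z Complex.I

namespace GJ

variable (u : ℂ → ℝ)

noncomputable def F : ℂ → (ℂ →L[ℝ] ℝ) := fderiv ℝ u
noncomputable def F2 : ℂ → (ℂ →L[ℝ] (ℂ →L[ℝ] ℝ)) := fderiv ℝ (F u)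

noncomputable def e (θ : ℝ) : ℂ := Complex.exp (θ * Complex.I)

noncomputable def A (s θ : ℝ) : ℝ := F u ((s : ℂ) * e θ) (e θ)
noncomputable def D (s θ : ℝ) : ℝ :=
  A u s θ + s * F2 u ((s : ℂ) * e θ) (e θ) (e θ)
noncomputable def G (s θ : ℝ) : ℝ :=
  s * F2 u ((s : ℂ) * e θ) (Complex.I * e θ) (Complex.I * e θ) - A u s θ

lemma cont_e : Continuous e :=
  Complex.continuous_exp.comp (Complex.continuous_ofReal.mul continuous_const)

lemma norm_e (θ : ℝ) : ‖e θ‖ = 1 := by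
  simp [e, Complex.norm_exp_ofReal_mul_I]

lemma hasDerivAt_e (θ : ℝ) : HasDerivAt e (Complex.I * e θ) θ := by
  have h1 : HasDerivAt (fun θ : ℝ => (θ : ℂ) * Complex.I) Complex.I θ := by
    simpa using (Complex.ofRealCLM.hasDerivAt (x := θ)).mul_const Complex.I
  have h2 := (Complex.hasDerivAt_exp ((θ : ℂ) * Complex.I)).scomp θ h1
  exact h2

lemma hasDerivAt_sc (θ : ℝ) (s : ℝ) :
    HasDerivAt (fun s : ℝ => (s : ℂ) * e θ) (e θ) s := by
  simpa using (Complex.ofRealCLM.hasDerivAt (x := s)).mul_const (e θ)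

lemma hasDerivAt_thc (s : ℝ) (θ : ℝ) :
    HasDerivAt (fun θ : ℝ => (s : ℂ) * e θ) ((s : ℂ) * (Complex.I * e θ)) θ :=
  (hasDerivAt_e θ).const_mul _

variable {u}

section Calc
variable (hu : ContDiff ℝ 2 u)
include hu

lemma contF : ContDiff ℝ 1 (F u) := hu.fderiv_right (by norm_num)

lemma contF2 : Continuous (F2 u) := (contF hu).continuous_fderiv one_ne_zero

lemma hasF (z : ℂ) : HasFDerivAt u (F u z) z :=
  (hu.differentiable (by norm_num) z).hasFDerivAt

lemma hasF2 (z : ℂ) : HasFDerivAt (F u) (F2 u z) z :=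
  ((contF hu).differentiable one_ne_zero z).hasFDerivAt

lemma lap_eq (z : ℂ) :
    planarLaplacian u z = F2 u z 1 1 + F2 u z Complex.I Complex.I := by
  have h : ∀ v : ℂ, fderiv ℝ (fun w => fderiv ℝ u w v) z
      = (ContinuousLinearMap.apply ℝ ℝ v).comp (F2 u z) := fun v =>
    ((ContinuousLinearMap.apply ℝ ℝ v).hasFDerivAt.comp z (hasF2 hu z)).fderiv
  simp [planarLaplacian, h]

lemma cont_lap : Continuous (planarLaplacian u) := by
  have : planarLaplacian u = fun z => F2 u z 1 1 + F2 u z Complex.I Complex.I :=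
    funext (lap_eq hu)
  rw [this]
  exact (((contF2 hu).clm_apply continuous_const).clm_apply continuous_const).add
    (((contF2 hu).clm_apply continuous_const).clm_apply continuous_const)

lemma cont_uA : Continuous (Function.uncurry (A u)) := by
  exact ((contF hu).continuous.comp
    ((Complex.continuous_ofReal.comp continuous_fst).mul (cont_e.comp continuous_snd))).clm_apply
    (cont_e.comp continuous_snd)

lemma cont_uD : Continuous (Function.uncurry (D u)) := by
  refine (cont_uA hu).add (continuous_fst.mul ?_)
  exact (((contF2 hu).comp
    ((Complex.continuous_ofReal.comp continuous_fst).mul (cont_e.comp continuous_snd))).clm_apply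
    (cont_e.comp continuous_snd)).clm_apply (cont_e.comp continuous_snd)

lemma cont_uG : Continuous (Function.uncurry (G u)) := by
  refine (continuous_fst.mul ?_).sub (cont_uA hu)
  exact (((contF2 hu).comp
    ((Complex.continuous_ofReal.comp continuous_fst).mul (cont_e.comp continuous_snd))).clm_apply
    ((continuous_const.mul cont_e).comp continuous_snd)).clm_apply
    ((continuous_const.mul cont_e).comp continuous_snd)

lemma hasDerivAt_u_s (θ s : ℝ) :
    HasDerivAt (fun s : ℝ => u ((s : ℂ) * e θ)) (A u s θ) s :=
  (hasF hu _).comp_hasDerivAt s (hasDerivAt_sc θ s)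

lemma hasDerivAt_A_s (θ s : ℝ) :
    HasDerivAt (fun s : ℝ => A u s θ) (F2 u ((s : ℂ) * e θ) (e θ) (e θ)) s := by
  have h : HasFDerivAt (fun z => F u z (e θ))
      ((ContinuousLinearMap.apply ℝ ℝ (e θ)).comp (F2 u ((s : ℂ) * e θ)))
      ((s : ℂ) * e θ) :=
    (ContinuousLinearMap.apply ℝ ℝ (e θ)).hasFDerivAt.comp _ (hasF2 hu _)
  exact h.comp_hasDerivAt s (hasDerivAt_sc θ s)

lemma hasDerivAt_sA (θ s : ℝ) :
    HasDerivAt (fun s : ℝ => s * A u s θ) (D u s θ) s := by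
  have h := (hasDerivAt_id' (x := s)).mul (hasDerivAt_A_s hu θ s)
  rw [one_mul] at h
  exact h

lemma hasDerivAt_B (s θ : ℝ) :
    HasDerivAt (fun θ : ℝ => F u ((s : ℂ) * e θ) ((s : ℂ) * (Complex.I * e θ)))
      (s * G u s θ) θ := by
  have hc : HasDerivAt (fun θ : ℝ => F u ((s : ℂ) * e θ))
      (F2 u ((s : ℂ) * e θ) ((s : ℂ) * (Complex.I * e θ))) θ :=
    (hasF2 hu _).comp_hasDerivAt θ (hasDerivAt_thc s θ)
  have hw : HasDerivAt (fun θ : ℝ => (s : ℂ) * (Complex.I * e θ))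
      ((s : ℂ) * (Complex.I * (Complex.I * e θ))) θ :=
    ((hasDerivAt_e θ).const_mul Complex.I).const_mul _
  have h := hc.clm_apply hw
  have e1 : (s : ℂ) * (Complex.I * e θ) = s • (Complex.I * e θ) := Complex.real_smul.symm
  have e2 : (s : ℂ) * (Complex.I * (Complex.I * e θ)) = s • (-(e θ)) := by
    rw [← mul_assoc Complex.I, Complex.I_mul_I, ← Complex.real_smul]
    ring_nf
  have : F2 u ((s : ℂ) * e θ) ((s : ℂ) * (Complex.I * e θ)) ((s : ℂ) * (Complex.I * e θ))
      + F u ((s : ℂ) * e θ) ((s : ℂ) * (Complex.I * (Complex.I * e θ))) = s * G u s θ := by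
    rw [e1, e2]
    simp only [_root_.map_smul, ContinuousLinearMap.smul_apply, map_neg,
      ContinuousLinearMap.neg_apply, smul_neg, smul_eq_mul, G, A]
    ring
  rw [← this]
  exact h

omit hu in
lemma rot (Q : ℂ →L[ℝ] ℂ →L[ℝ] ℝ) (θ : ℝ) :
    Q (e θ) (e θ) + Q (Complex.I * e θ) (Complex.I * e θ)
      = Q 1 1 + Q Complex.I Complex.I := by
  have h1 : e θ = Real.cos θ • (1 : ℂ) + Real.sin θ • Complex.I := by
    simp [e, Complex.exp_mul_I, Complex.real_smul]
  have h2 : Complex.I * e θ = (-Real.sin θ) • (1 : ℂ) + Real.cos θ • Complex.I := by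
    rw [h1, mul_add, mul_smul_comm, mul_smul_comm, Complex.I_mul_I, mul_one,
      smul_neg, ← neg_smul, add_comm]
  rw [h2, h1]
  simp only [map_add, _root_.map_smul, ContinuousLinearMap.add_apply, ContinuousLinearMap.smul_apply,
    smul_eq_mul, ContinuousLinearMap.coe_add', Pi.add_apply, ContinuousLinearMap.coe_smul',
    Pi.smul_apply]
  linear_combination (Q 1 1 + Q Complex.I Complex.I) * (Real.sin_sq_add_cos_sq θ)

lemma key (s θ : ℝ) :
    s * planarLaplacian u ((s : ℂ) * e θ) = D u s θ + G u s θ := by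
  rw [lap_eq hu, ← rot (F2 u ((s : ℂ) * e θ)) θ]
  simp only [D, G]
  ring

omit hu in
lemma symm_eq (p : ℝ × ℝ) : Complex.polarCoord.symm p = (p.1 : ℂ) * e p.2 := by
  simp [e, Complex.exp_mul_I, Complex.ofReal_cos, Complex.ofReal_sin]

omit hu in
lemma swap_integral {f : ℝ → ℝ → ℝ} (hf : Continuous (Function.uncurry f))
    {a b c d : ℝ} (hab : a ≤ b) (hcd : c ≤ d) :
    ∫ x in a..b, (∫ y in c..d, f x y) = ∫ y in c..d, (∫ x in a..b, f x y) := by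
  have hint : Integrable (Function.uncurry f)
      ((volume.restrict (Ioc a b)).prod (volume.restrict (Ioc c d))) := by
    rw [Measure.prod_restrict, ← Measure.volume_eq_prod]
    exact ((hf.continuousOn).integrableOn_compact (isCompact_Icc.prod isCompact_Icc)).mono_set
      (Set.prod_mono Ioc_subset_Icc_self Ioc_subset_Icc_self)
  simp only [intervalIntegral.integral_of_le hab, intervalIntegral.integral_of_le hcd]
  exact MeasureTheory.integral_integral_swap hint

lemma intG {s : ℝ} (hs : s ≠ 0) : ∫ θ in (-π)..π, G u s θ = 0 := by
  have hF : ∀ θ ∈ uIcc (-π) π, HasDerivAt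
      (fun θ : ℝ => F u ((s : ℂ) * e θ) ((s : ℂ) * (Complex.I * e θ))) (s * G u s θ) θ :=
    fun θ _ => hasDerivAt_B hu s θ
  have hi : IntervalIntegrable (fun θ => s * G u s θ) volume (-π) π :=
    (continuous_const.mul
      (show Continuous fun θ => G u s θ from (cont_uG hu).comp (Continuous.prodMk_right s))
      ).intervalIntegrable _ _
  have h0 := intervalIntegral.integral_eq_sub_of_hasDerivAt hF hi
  have he1 : e π = -1 := by simp [e, Complex.exp_pi_mul_I]
  have he2 : e (-π) = -1 := by
    simp only [e, Complex.ofReal_neg, neg_mul, Complex.exp_neg, Complex.exp_pi_mul_I]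
    norm_num
  rw [he1, he2, sub_self, intervalIntegral.integral_const_mul] at h0
  exact (mul_eq_zero.mp h0).resolve_left hs

lemma inner_eq {s : ℝ} (hs : s ≠ 0) :
    ∫ θ in (-π)..π, s * planarLaplacian u ((s : ℂ) * e θ) = ∫ θ in (-π)..π, D u s θ := by
  have hcD : Continuous fun θ => D u s θ := (cont_uD hu).comp (Continuous.prodMk_right s)
  have hcG : Continuous fun θ => G u s θ := (cont_uG hu).comp (Continuous.prodMk_right s)
  rw [intervalIntegral.integral_congr (g := fun θ => D u s θ + G u s θ)
    (fun θ _ => key hu s θ),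
    intervalIntegral.integral_add (hcD.intervalIntegrable _ _) (hcG.intervalIntegrable _ _),
    intG hu hs, add_zero]

lemma ball_eq {ρ : ℝ} (hρ : 0 < ρ) :
    ∫ z in Metric.ball (0:ℂ) ρ, planarLaplacian u z
      = ρ * ∫ θ in (-π)..π, A u ρ θ := by
  have hπ : (0:ℝ) < π := Real.pi_pos
  have hππ : -π ≤ π := by linarith
  have h0 := Complex.integral_comp_polarCoord_symm
    ((Metric.ball (0:ℂ) ρ).indicator (planarLaplacian u))
  rw [MeasureTheory.integral_indicator measurableSet_ball] at h0
  rw [← h0, polarCoord_target]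
  have hmeas : MeasurableSet (Ioi (0:ℝ) ×ˢ Ioo (-π) π) := measurableSet_Ioi.prod measurableSet_Ioo
  have step1 : ∫ p in Ioi (0:ℝ) ×ˢ Ioo (-π) π,
        p.1 • (Metric.ball (0:ℂ) ρ).indicator (planarLaplacian u) (Complex.polarCoord.symm p)
      = ∫ p in Ioi (0:ℝ) ×ˢ Ioo (-π) π,
        (Iio ρ ×ˢ (univ : Set ℝ)).indicator
          (fun p : ℝ × ℝ => p.1 * planarLaplacian u ((p.1 : ℂ) * e p.2)) p := by
    refine setIntegral_congr_fun hmeas fun p hp => ?_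
    have hp1 : (0:ℝ) < p.1 := hp.1
    have hmem : (Complex.polarCoord.symm p ∈ Metric.ball (0:ℂ) ρ) ↔ p.1 < ρ := by
      rw [mem_ball_zero_iff, Complex.norm_polarCoord_symm,
        abs_of_pos hp1]
    by_cases h : p.1 < ρ
    · rw [Set.indicator_of_mem (hmem.mpr h),
        Set.indicator_of_mem (show p ∈ Iio ρ ×ˢ (univ : Set ℝ) from ⟨h, mem_univ _⟩)]
      rw [symm_eq, smul_eq_mul]
    · rw [Set.indicator_of_notMem (fun hm => h (hmem.mp hm)),
        Set.indicator_of_notMem (fun hm => h hm.1), smul_zero]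
  rw [step1, setIntegral_indicator (measurableSet_Iio.prod MeasurableSet.univ)]
  have hset : (Ioi (0:ℝ) ×ˢ Ioo (-π) π) ∩ (Iio ρ ×ˢ (univ : Set ℝ))
      = Ioo 0 ρ ×ˢ Ioo (-π) π := by
    rw [Set.prod_inter_prod, Set.inter_univ, Set.Ioi_inter_Iio]
  rw [hset]
  have hcontp : Continuous fun p : ℝ × ℝ => p.1 * planarLaplacian u ((p.1 : ℂ) * e p.2) :=
    continuous_fst.mul ((cont_lap hu).comp
      ((Complex.continuous_ofReal.comp continuous_fst).mul (cont_e.comp continuous_snd)))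
  have hintOn : IntegrableOn (fun p : ℝ × ℝ => p.1 * planarLaplacian u ((p.1 : ℂ) * e p.2))
      (Ioo 0 ρ ×ˢ Ioo (-π) π) (volume.prod volume) := by
    rw [← Measure.volume_eq_prod]
    exact ((hcontp.continuousOn).integrableOn_compact
      (isCompact_Icc.prod isCompact_Icc)).mono_set
      (Set.prod_mono Ioo_subset_Icc_self Ioo_subset_Icc_self)
  rw [Measure.volume_eq_prod ℝ ℝ, setIntegral_prod _ hintOn]
  have houter : ∫ s in Ioo (0:ℝ) ρ, (∫ θ in Ioo (-π) π, s * planarLaplacian u ((s:ℂ) * e θ))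
      = ∫ s in Ioo (0:ℝ) ρ, (∫ θ in (-π)..π, D u s θ) := by
    refine setIntegral_congr_fun measurableSet_Ioo fun s hs => ?_
    rw [← MeasureTheory.integral_Ioc_eq_integral_Ioo,
      ← intervalIntegral.integral_of_le hππ]
    exact inner_eq hu (ne_of_gt hs.1)
  rw [houter, ← MeasureTheory.integral_Ioc_eq_integral_Ioo,
    ← intervalIntegral.integral_of_le hρ.le,
    swap_integral (cont_uD hu) hρ.le hππ]
  have hftc : ∀ θ, (∫ s in (0:ℝ)..ρ, D u s θ) = ρ * A u ρ θ := by
    intro θ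
    have h := intervalIntegral.integral_eq_sub_of_hasDerivAt (a := 0) (b := ρ)
      (f := fun s : ℝ => s * A u s θ) (fun s _ => hasDerivAt_sA hu θ s)
      ((show Continuous fun s => D u s θ from
        (cont_uD hu).comp (continuous_id.prodMk continuous_const)).intervalIntegrable _ _)
    simpa using h
  rw [intervalIntegral.integral_congr (g := fun θ => ρ * A u ρ θ) (fun θ _ => hftc θ),
    intervalIntegral.integral_const_mul]

lemma hasDerivAt_M (s₀ : ℝ) :
    HasDerivAt (fun s : ℝ => ∫ θ in (-π)..π, u ((s:ℂ) * e θ))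
      (∫ θ in (-π)..π, A u s₀ θ) s₀ := by
  obtain ⟨C, hC⟩ := (isCompact_closedBall (0:ℂ) (|s₀|+1)).exists_bound_of_continuousOn
    ((contF hu).continuous.continuousOn)
  refine (intervalIntegral.hasDerivAt_integral_of_dominated_loc_of_deriv_le (𝕜 := ℝ)
    (F := fun s θ => u ((s:ℂ) * e θ)) (F' := fun s θ => A u s θ) (bound := fun _ => C)
    (Metric.ball_mem_nhds s₀ zero_lt_one) ?_ ?_ ?_ ?_ ?_ ?_).2
  · exact Filter.Eventually.of_forall fun x =>
      (hu.continuous.comp (continuous_const.mul cont_e)).aestronglyMeasurable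
  · exact (hu.continuous.comp (continuous_const.mul cont_e)).intervalIntegrable _ _
  · exact (show Continuous fun θ => A u s₀ θ from
      (cont_uA hu).comp (Continuous.prodMk_right s₀)).aestronglyMeasurable
  · refine Filter.Eventually.of_forall fun θ _ x hx => ?_
    have hz : ((x:ℂ) * e θ) ∈ Metric.closedBall (0:ℂ) (|s₀|+1) := by
      rw [Metric.mem_closedBall, dist_zero_right, norm_mul, norm_e, mul_one,
        Complex.norm_real, Real.norm_eq_abs]
      have hx1 : |x - s₀| < 1 := by
        rw [Metric.mem_ball, Real.dist_eq] at hx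
        exact hx
      calc |x| = |x - s₀ + s₀| := by ring_nf
        _ ≤ |x - s₀| + |s₀| := abs_add_le _ _
        _ ≤ |s₀| + 1 := by linarith
    calc ‖A u x θ‖ ≤ ‖F u ((x:ℂ) * e θ)‖ * ‖e θ‖ := (F u _).le_opNorm _
      _ = ‖F u ((x:ℂ) * e θ)‖ := by rw [norm_e, mul_one]
      _ ≤ C := hC _ hz
  · exact intervalIntegrable_const
  · exact Filter.Eventually.of_forall fun θ _ x _ => hasDerivAt_u_s hu θ x

end Calc

end GJ

/-- Green–Jensen identity: the logarithmically averaged integral of the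
Laplacian of a `C²` function `u` over discs of radius up to `r` equals the
circle mean of `u` at radius `r` minus `u 0`. -/
theorem green_jensen_identity
    (u : ℂ → ℝ) (hu : ContDiff ℝ 2 u) (r : ℝ) (hr : 0 < r) :
    (∫ ρ in (0:ℝ)..r,
        ((1 / (2 * Real.pi)) * ∫ z in Metric.ball (0:ℂ) ρ, planarLaplacian u z ∂volume) / ρ) =
      (1 / (2 * Real.pi)) * (∫ θ in (0:ℝ)..(2 * Real.pi),
        u ((r : ℂ) * Complex.exp ((θ : ℂ) * Complex.I))) - u 0 := by
  have hπ : (0:ℝ) < π := Real.pi_pos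
  set M : ℝ → ℝ := fun s => ∫ θ in (-π)..π, u ((s:ℂ) * GJ.e θ) with hMdef
  set M₁ : ℝ → ℝ := fun s => ∫ θ in (-π)..π, GJ.A u s θ with hM₁def
  have hMd : ∀ s, HasDerivAt M (M₁ s) s := fun s => GJ.hasDerivAt_M hu s
  have hcontM₁ : Continuous M₁ :=
    continuous_parametric_intervalIntegral_of_continuous' (GJ.cont_uA hu) _ _
  have hstep : ∫ s in (0:ℝ)..r, M₁ s = M r - M 0 :=
    intervalIntegral.integral_eq_sub_of_hasDerivAt (fun s _ => hMd s)
      (hcontM₁.intervalIntegrable _ _)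
  have hLHS : (∫ ρ in (0:ℝ)..r,
      ((1 / (2 * Real.pi)) * ∫ z in Metric.ball (0:ℂ) ρ, planarLaplacian u z ∂volume) / ρ)
      = ∫ ρ in (0:ℝ)..r, (1/(2*Real.pi)) * M₁ ρ := by
    refine intervalIntegral.integral_congr_ae (MeasureTheory.ae_of_all _ fun ρ hρ => ?_)
    rw [Set.uIoc_of_le hr.le] at hρ
    rw [GJ.ball_eq hu hρ.1]
    have hρ0 : ρ ≠ 0 := ne_of_gt hρ.1
    rw [hM₁def]
    field_simp
    try ring
  have hM0 : M 0 = 2 * π * u 0 := by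
    rw [hMdef]
    simp only [Complex.ofReal_zero, zero_mul, intervalIntegral.integral_const, smul_eq_mul]
    ring
  have hper : Function.Periodic
      (fun θ : ℝ => u ((r:ℂ) * Complex.exp ((θ:ℂ) * Complex.I))) (2*π) := by
    intro θ
    have h : Complex.exp ((↑(θ + 2*π) : ℂ) * Complex.I)
        = Complex.exp ((θ:ℂ) * Complex.I) := by
      push_cast
      rw [add_mul, Complex.exp_add, Complex.exp_two_pi_mul_I, mul_one]
    simp only [h]
  have hRHS : (∫ θ in (0:ℝ)..(2*π), u ((r:ℂ) * Complex.exp ((θ:ℂ) * Complex.I))) = M r := by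
    have h := hper.intervalIntegral_add_eq 0 (-π)
    simp only [zero_add] at h
    rw [h, show -π + 2*π = π by ring]
    simp only [hMdef, GJ.e]
  rw [hLHS, intervalIntegral.integral_const_mul, hstep, hM0, hRHS]
  field_simp
  try ring
end
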